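/- arXiv:2106.03319 — 5 statements merged into one kernel-verified Lean document; each statement's English description precedes it below -/
import Mathlib

section
/- Let M be an n×t matrix over F_q of rank m. If C is an n×n matrix over F_q such that the matrix equation MZ = C has a solution Z (a t×n matrix), then every row of C is the same linear combination of the first m rows of C as the corresponding relation among the rows of M; consequently C is determined by m of its rows together with M, and the number of such C of rank k is at most d·q^{mk + k(n−k)} for some absolute constant d (depending only on n, k). -/
/-!
If `MZ = C` then every column of `C` lies in the column space `W` of `M`, which has dimension
`m = rank M`. A matrix of rank `k` has `k` pivot columns spanning its column space, so it is
determined by the set `S` of pivot columns (fewer than `2 ^ n` choices), the pivot columns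
themselves (`k` vectors of `W`, i.e. `q ^ (m * k)` choices) and the coefficients expressing
each of the `n - k` remaining columns in terms of them (`q ^ (k * (n - k))` choices).
-/

open Matrix Module Submodule Set

section Pivots

variable {ι K V : Type*} [Field K] [AddCommGroup V] [Module K V]

theorem exists_finset_card_eq_finrank_range_subset_span [Finite ι] (v : ι → V) :
    ∃ S : Finset ι, S.card = finrank K (span K (range v)) ∧ range v ⊆ span K (v '' S) := by
  classical
  obtain ⟨κ, a, ha, hspan, hli⟩ := exists_linearIndependent' K v
  have : Finite κ := Finite.of_injective a ha
  have := Fintype.ofFinite κ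
  refine ⟨Finset.univ.image a, ?_, ?_⟩
  · rw [Finset.card_image_of_injective _ ha, Finset.card_univ, ← hspan,
      finrank_span_eq_card hli]
  · rw [Finset.coe_image, Finset.coe_univ, image_univ, ← range_comp, hspan]
    exact subset_span

variable [Fintype ι] [DecidableEq ι]

def extendFromPivots (S : Finset ι) (c : S → V) (B : (Sᶜ : Finset ι) → S → K) :
    ι → V :=
  fun j => if h : j ∈ S then c ⟨j, h⟩ else ∑ i, B ⟨j, Finset.mem_compl.2 h⟩ i • c i

theorem exists_extendFromPivots_eq {S : Finset ι} {v : ι → V}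
    (hS : range v ⊆ span K (v '' S)) :
    ∃ B : (Sᶜ : Finset ι) → S → K, extendFromPivots S (fun i => v i) B = v := by
  have hcoeff : ∀ j, ∃ b : S → K, ∑ i, b i • v i = v j := fun j =>
    (mem_span_range_iff_exists_fun K).1 <| by
      have hj := hS (mem_range_self j)
      rwa [image_eq_range] at hj
  choose B hB using hcoeff
  refine ⟨fun j => B j, funext fun j => ?_⟩
  by_cases h : j ∈ S
  · simp [extendFromPivots, h]
  · simp only [extendFromPivots, dif_neg h]
    exact hB j

theorem natCard_family_finrank_span_le [Finite K] (W : Submodule K V) [FiniteDimensional K W]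
    (k : ℕ) :
    Nat.card {v : ι → V // (∀ j, v j ∈ W) ∧ finrank K (span K (range v)) = k} ≤
      2 ^ Fintype.card ι * Nat.card K ^ (finrank K W * k + k * (Fintype.card ι - k)) := by
  let T := Σ S : {S : Finset ι // S.card = k}, (S.1 → W) × ((S.1ᶜ : Finset ι) → S.1 → K)
  have hcover : ∀ v : {v : ι → V // (∀ j, v j ∈ W) ∧ finrank K (span K (range v)) = k},
      ∃ x : T, extendFromPivots x.1.1 (fun i => (x.2.1 i : V)) x.2.2 = v.1 := by
    rintro ⟨v, hvW, hrank⟩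
    obtain ⟨S, hcard, hS⟩ := exists_finset_card_eq_finrank_range_subset_span (K := K) v
    obtain ⟨B, hB⟩ := exists_extendFromPivots_eq hS
    exact ⟨⟨⟨S, hcard.trans hrank⟩, fun i => ⟨v i, hvW i⟩, B⟩, hB⟩
  choose g hg using hcover
  have : Finite W := Module.finite_of_finite K
  have hfiber : ∀ S : {S : Finset ι // S.card = k},
      Nat.card ((S.1 → W) × ((S.1ᶜ : Finset ι) → S.1 → K)) =
        Nat.card K ^ (finrank K W * k + k * (Fintype.card ι - k)) := by
    rintro ⟨S, hS⟩
    simp [Nat.card_fun, Module.natCard_eq_pow_finrank (K := K) (V := W), hS, pow_add, ← pow_mul,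
      mul_comm]
  calc _ ≤ Nat.card T :=
        Nat.card_le_card_of_injective g fun v w h => Subtype.ext <| by rw [← hg, ← hg, h]
    _ = Nat.card {S : Finset ι // S.card = k} *
          Nat.card K ^ (finrank K W * k + k * (Fintype.card ι - k)) := by
      rw [Nat.card_sigma, Finset.sum_congr rfl fun S _ => hfiber S, Finset.sum_const,
        smul_eq_mul, Finset.card_univ, ← Nat.card_eq_fintype_card]
    _ ≤ 2 ^ Fintype.card ι * _ := by
      gcongr
      calc Nat.card {S : Finset ι // S.card = k} ≤ Nat.card (Finset ι) :=
            Finite.card_subtype_le _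
        _ = _ := by simp

end Pivots

theorem Matrix.transpose_mul_apply_mem_range_mulVecLin {m n p K : Type*} [Field K] [Fintype n]
    (M : Matrix m n K) (Z : Matrix n p K) (j : p) :
    (M * Z)ᵀ j ∈ LinearMap.range M.mulVecLin :=
  ⟨Zᵀ j, by ext i; simp [mulVec, dotProduct, mul_apply]⟩

/-- Given M ∈ M_{n×t}(F_q) of rank m, the number of C ∈ M_n(F_q) of rank k (k ≤ m) such
that MZ = C has a solution is at most d·q^{mk + k(n−k)} for a constant d depending only
on n and k. -/
theorem stmt_3 (n k : ℕ) :
    ∃ d : ℕ, 0 < d ∧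
      ∀ (t m q : ℕ) (F : Type) [Field F] [Fintype F], Fintype.card F = q →
        k ≤ m →
        ∀ M : Matrix (Fin n) (Fin t) F, M.rank = m →
        Nat.card {C : Matrix (Fin n) (Fin n) F //
            C.rank = k ∧ ∃ Z : Matrix (Fin t) (Fin n) F, M * Z = C} ≤
          d * q ^ (m * k + k * (n - k)) := by
  refine ⟨2 ^ n, by positivity, fun t m q F _ _ hq _ M hM => ?_⟩
  let W := LinearMap.range M.mulVecLin
  have hW : finrank F W = m := hM
  let cols : {C : Matrix (Fin n) (Fin n) F //
      C.rank = k ∧ ∃ Z : Matrix (Fin t) (Fin n) F, M * Z = C} →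
      {v : Fin n → Fin n → F // (∀ j, v j ∈ W) ∧ finrank F (span F (range v)) = k} :=
    fun C => ⟨C.1ᵀ, fun j => by
      obtain ⟨Z, hZ⟩ := C.2.2
      exact hZ ▸ M.transpose_mul_apply_mem_range_mulVecLin Z j,
      C.1.rank_eq_finrank_span_cols ▸ C.2.1⟩
  calc _ ≤ Nat.card {v : Fin n → Fin n → F //
          (∀ j, v j ∈ W) ∧ finrank F (span F (range v)) = k} :=
        Nat.card_le_card_of_injective cols fun C D h =>
          Subtype.ext <| Matrix.transpose_injective <| congrArg Subtype.val h
    _ ≤ 2 ^ n * q ^ (m * k + k * (n - k)) := by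
      simpa [hW, hq] using natCard_family_finrank_span_le (ι := Fin n) W k
end

section
/- For n ≥ m ≥ k ≥ 0, the number of pairs (M, C) with M ∈ M_{n×t}(F_q) of rank m and C ∈ M_n(F_q) of rank k such that the equation MZ = C has a solution Z ∈ M_{t×n}(F_q) is at most C' · q^{nm + m(t−m) + mk + k(n−k)} for some constant C' independent of q. -/
/-!
A rank-`s` matrix `X ∈ M_{a×b}(F_q)` whose columns lie in the column space of a fixed
`a × r` matrix `V` is determined by `s` column indices whose columns form a basis of its column
space, an enumeration of the remaining `b - s` indices, the `r × s` coordinates of the basis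
columns with respect to `V`, and the `s × (b - s)` coordinates of the other columns with respect
to that basis. Hence there are at most `b ^ b * q ^ (r s + s (b - s))` such `X`. Counting the
matrices `M` of rank `m` this way with `V = 1`, and, for each `M`, the matrices `C` of rank `k`
with `V` the `m` basis columns of `M` (solvability of `MZ = C` puts the columns of `C` in the
column space of `M`), gives the bound with `C' = t ^ t * n ^ n`.
-/

open Matrix Function

variable {F : Type*} [Field F] {a b s : ℕ}

theorem Matrix.exists_eq_submatrix_mul_of_rank_eq {X : Matrix (Fin a) (Fin b) F}
    (hX : X.rank = s) :
    ∃ c : Fin s → Fin b, Injective c ∧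
      ∃ G : Matrix (Fin s) (Fin b) F, G.submatrix id c = 1 ∧ X = X.submatrix id c * G := by
  rw [rank_eq_finrank_span_cols] at hX
  subst hX
  obtain ⟨f, hf_mem, hf_span, hf_li⟩ :=
    Submodule.exists_fun_fin_finrank_span_eq F (Set.range X.col)
  choose c hc using hf_mem
  have hcol : X.col ∘ c = f := funext hc
  subst hcol
  refine ⟨c, hf_li.injective.of_comp, ?_⟩
  set B := Module.Basis.span hf_li
  have hmem (j : Fin b) : X.col j ∈ Submodule.span F (Set.range (X.col ∘ c)) := by
    rw [hf_span]
    exact Submodule.subset_span ⟨j, rfl⟩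
  refine ⟨Matrix.of fun p j => B.repr ⟨X.col j, hmem j⟩ p, ?_, ?_⟩
  · ext p p'
    have : (⟨X.col (c p'), hmem (c p')⟩ : Submodule.span F _) = B p' := by
      rw [Module.Basis.span_apply]; rfl
    simp [this, Finsupp.single_apply, Matrix.one_apply, eq_comm]
  · ext i j
    have := congr_arg (fun v : Submodule.span F (Set.range (X.col ∘ c)) => (v : Fin a → F) i)
      (B.sum_repr ⟨X.col j, hmem j⟩)
    simpa [B, Matrix.mul_apply, mul_comm] using this.symm

theorem Fin.exists_range_union_eq_univ {c : Fin s → Fin b} (hc : Injective c) :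
    ∃ c' : Fin (b - s) → Fin b, Set.range c ∪ Set.range c' = Set.univ := by
  classical
  have hcard : (Finset.univ.image c)ᶜ.card = b - s := by
    rw [Finset.card_compl, Finset.card_image_of_injective _ hc, Finset.card_univ,
      Fintype.card_fin, Fintype.card_fin]
  refine ⟨(Finset.univ.image c)ᶜ.orderEmbOfFin hcard, ?_⟩
  rw [Finset.range_orderEmbOfFin, Finset.coe_compl, Finset.coe_image, Finset.coe_univ,
    Set.image_univ, Set.union_compl_self]

theorem Matrix.ext_of_submatrix_eq {ι R : Type*} {c : Fin s → Fin b} {c' : Fin (b - s) → Fin b}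
    (hcover : Set.range c ∪ Set.range c' = Set.univ) {A B : Matrix ι (Fin b) R}
    (h : A.submatrix id c = B.submatrix id c) (h' : A.submatrix id c' = B.submatrix id c') :
    A = B := by
  ext i j
  obtain ⟨p, rfl⟩ | ⟨p, rfl⟩ := hcover.symm ▸ Set.mem_univ j
  · exact congr_fun (congr_fun h i) p
  · exact congr_fun (congr_fun h' i) p

theorem Matrix.card_le_of_rank_eq_of_exists_mul_eq [Fintype F] {r : ℕ}
    (V : Matrix (Fin a) (Fin r) F)
    (P : Matrix (Fin a) (Fin b) F → Prop)
    (hP : ∀ X, P X → X.rank = s ∧ ∃ W : Matrix (Fin r) (Fin b) F, V * W = X) :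
    Nat.card {X // P X} ≤ b ^ b * Fintype.card F ^ (r * s + s * (b - s)) := by
  by_cases hsb : s ≤ b
  swap
  · have : IsEmpty {X // P X} := ⟨fun X => hsb ((hP X.1 X.2).1 ▸ X.1.rank_le_width)⟩
    simp
  have hcode : ∀ X : {X // P X}, ∃ d : (Fin s → Fin b) × (Fin (b - s) → Fin b) ×
      Matrix (Fin r) (Fin s) F × Matrix (Fin s) (Fin (b - s)) F,
      Set.range d.1 ∪ Set.range d.2.1 = Set.univ ∧ ∃ G : Matrix (Fin s) (Fin b) F,
        G.submatrix id d.1 = 1 ∧ G.submatrix id d.2.1 = d.2.2.2 ∧ X.1 = V * d.2.2.1 * G := by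
    rintro ⟨X, hX⟩
    obtain ⟨hrank, W, rfl⟩ := hP X hX
    obtain ⟨c, hc, G, hG, hXG⟩ := exists_eq_submatrix_mul_of_rank_eq hrank
    obtain ⟨c', hcover⟩ := Fin.exists_range_union_eq_univ hc
    exact ⟨⟨c, c', W.submatrix id c, G.submatrix id c'⟩, hcover, G, hG, rfl, hXG⟩
  choose code hcover G hG hG' hXG using hcode
  have hinj : Injective code := by
    intro X Y hXY
    have hGXY : G X = G Y := ext_of_submatrix_eq (hcover X) (by rw [hG, hXY, hG])
      (by rw [hG', hXY, hG'])
    exact Subtype.ext (by rw [hXG, hXG, hXY, hGXY])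
  calc Nat.card {X // P X} ≤ _ := Nat.card_le_card_of_injective code hinj
    _ = b ^ b * Fintype.card F ^ (r * s + s * (b - s)) := by
      simp only [Nat.card_eq_fintype_card, Fintype.card_prod, Fintype.card_fun,
        Fintype.card_fin, Matrix]
      rw [← mul_assoc, ← pow_add, Nat.add_sub_cancel' hsb]
      ring

theorem Nat.card_subtype_prod_le {α β : Type*} [Finite α] [Finite β] {P : α → Prop}
    {Q : α → β → Prop} {B : ℕ} (hB : ∀ a, P a → Nat.card {b // Q a b} ≤ B) :
    Nat.card {p : α × β // P p.1 ∧ Q p.1 p.2} ≤ Nat.card {a // P a} * B := by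
  have : Fintype {a // P a} := Fintype.ofFinite _
  let e : {p : α × β // P p.1 ∧ Q p.1 p.2} ≃ Σ a : {a // P a}, {b // Q a b} :=
    { toFun := fun p => ⟨⟨p.1.1, p.2.1⟩, ⟨p.1.2, p.2.2⟩⟩
      invFun := fun x => ⟨(x.1.1, x.2.1), x.1.2, x.2.2⟩
      left_inv := fun _ => rfl
      right_inv := fun _ => rfl }
  rw [Nat.card_congr e, Nat.card_sigma, Nat.card_eq_fintype_card (α := {a // P a}),
    ← smul_eq_mul, ← Finset.card_univ]
  exact Finset.sum_le_card_nsmul _ _ _ fun a _ => hB a.1 a.2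

theorem stmt_4_general (n t m k : ℕ) :
    ∃ C' : ℕ, 0 < C' ∧
      ∀ (q : ℕ) (F : Type) [Field F] [Fintype F], Fintype.card F = q →
        Nat.card {p : Matrix (Fin n) (Fin t) F × Matrix (Fin n) (Fin n) F //
            p.1.rank = m ∧ p.2.rank = k ∧ ∃ Z : Matrix (Fin t) (Fin n) F, p.1 * Z = p.2} ≤
          C' * q ^ (n * m + m * (t - m) + m * k + k * (n - k)) := by
  refine ⟨t ^ t * n ^ n, Nat.mul_pos Nat.pow_self_pos Nat.pow_self_pos, ?_⟩
  rintro q F _ _ rfl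
  have hM := card_le_of_rank_eq_of_exists_mul_eq (b := t) (s := m)
    (1 : Matrix (Fin n) (Fin n) F) (·.rank = m)
    fun M hM => ⟨hM, M, Matrix.one_mul M⟩
  have hC (M : Matrix (Fin n) (Fin t) F) (hM : M.rank = m) :
      Nat.card {C : Matrix (Fin n) (Fin n) F //
          C.rank = k ∧ ∃ Z : Matrix (Fin t) (Fin n) F, M * Z = C} ≤
        n ^ n * Fintype.card F ^ (m * k + k * (n - k)) := by
    obtain ⟨c, -, G, -, hMG⟩ := exists_eq_submatrix_mul_of_rank_eq hM
    refine card_le_of_rank_eq_of_exists_mul_eq (M.submatrix id c) _ ?_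
    rintro _ ⟨hCk, Z, rfl⟩
    exact ⟨hCk, G * Z, by rw [← Matrix.mul_assoc, ← hMG]⟩
  calc _ ≤ _ := Nat.card_subtype_prod_le hC
    _ ≤ t ^ t * Fintype.card F ^ (n * m + m * (t - m)) *
          (n ^ n * Fintype.card F ^ (m * k + k * (n - k))) := Nat.mul_le_mul_right _ hM
    _ = _ := by ring

/-- For n ≥ m ≥ k ≥ 0, the number of pairs (M, C), M ∈ M_{n×t}(F_q) of rank m and
C ∈ M_n(F_q) of rank k, such that MZ = C is solvable, is at most
C'·q^{nm + m(t−m) + mk + k(n−k)} with C' independent of q. -/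
theorem stmt_4 (n t m k : ℕ) (hnt : n ≤ t) (hkm : k ≤ m) (hmn : m ≤ n) :
    ∃ C' : ℕ, 0 < C' ∧
      ∀ (q : ℕ) (F : Type) [Field F] [Fintype F], Fintype.card F = q →
        Nat.card {p : Matrix (Fin n) (Fin t) F × Matrix (Fin n) (Fin n) F //
            p.1.rank = m ∧ p.2.rank = k ∧ ∃ Z : Matrix (Fin t) (Fin n) F, p.1 * Z = p.2} ≤
          C' * q ^ (n * m + m * (t - m) + m * k + k * (n - k)) :=
  stmt_4_general n t m k
end

section
/- For 0 ≤ m < n and 0 ≤ k ≤ n with (m,k) ≠ (0,0), the number of pairs (M, Y) with M ∈ M_{n×dn}(F_q) of rank m and Y ∈ M_n(F_q) of rank k is at most C·q^{(d+1)nm + 2nk − m² − k²}, and this is at most C·q^{(d+1)n² − (d−1)n − 1}. -/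
/-!
A matrix of rank `m` factors as `B * P` with `B` of full column rank `m`, and such factorizations
are unique up to `(B * G, G⁻¹ * P)` with `G ∈ GL_m`. Hence
`#{rank m} * |GL_m| ≤ q ^ (n m + m N)`, and `|GL_m| = ∏ (q ^ m - q ^ i) ≥ q ^ (m²) / 2 ^ m`
gives `#{rank m} ≤ 2 ^ m * q ^ (n m + m N - m²)`. Multiplying the bounds for `M` and `Y` gives
the first inequality with `C = 4 ^ n`; the second is an elementary estimate of the exponent,
sharp at `m = n - 1`, `k = n`.
-/

namespace Matrix

variable {F : Type*} [Field F] {ι κ : Type*} [Fintype κ] [DecidableEq κ]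

theorem exists_mul_eq_of_rank_eq {m : ℕ} (M : Matrix ι κ F) (hM : M.rank = m) :
    ∃ (B : Matrix ι (Fin m) F) (P : Matrix (Fin m) κ F),
      B * P = M ∧ Function.Injective (toLin' B) := by
  let W := LinearMap.range (toLin' M)
  let e : W ≃ₗ[F] Fin m → F :=
    LinearEquiv.ofFinrankEq _ _ (by rw [Module.finrank_fin_fun]; exact hM)
  refine ⟨LinearMap.toMatrix' (W.subtype ∘ₗ e.symm.toLinearMap),
    LinearMap.toMatrix' (e.toLinearMap ∘ₗ (toLin' M).rangeRestrict), ?_, ?_⟩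
  · conv_rhs => rw [← LinearMap.toMatrix'_toLin' M]
    rw [← LinearMap.toMatrix'_comp]
    congr 1
    exact LinearMap.ext fun v => by simp [W]
  · rw [toLin'_toMatrix']
    exact W.injective_subtype.comp e.symm.injective

theorem mul_left_cancel_of_injective_toLin' {ν : Type*} [Fintype ν] [DecidableEq ν]
    {B : Matrix ι κ F} (hB : Function.Injective (toLin' B)) {X Y : Matrix κ ν F}
    (h : B * X = B * Y) : X = Y :=
  toLin'.injective <| LinearMap.ext fun v => hB <| by
    simpa only [toLin'_mul, LinearMap.comp_apply] using LinearMap.congr_fun (congrArg toLin' h) v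

section Finite

variable [Fintype F] [Fintype ι]

local notation "q" => Fintype.card F

theorem card_rank_eq_mul_card_GL_le (m : ℕ) :
    Nat.card {M : Matrix ι κ F // M.rank = m} * Nat.card (GL (Fin m) F) ≤
      q ^ (Fintype.card ι * m) * q ^ (m * Fintype.card κ) := by
  choose B P hBP hB using fun M : {M : Matrix ι κ F // M.rank = m} =>
    exists_mul_eq_of_rank_eq M.1 M.2
  let f : {M : Matrix ι κ F // M.rank = m} × GL (Fin m) F →
      Matrix ι (Fin m) F × Matrix (Fin m) κ F :=
    fun x => (B x.1 * (x.2 : Matrix (Fin m) (Fin m) F),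
      (↑x.2⁻¹ : Matrix (Fin m) (Fin m) F) * P x.1)
  have hprod : ∀ x, (f x).1 * (f x).2 = x.1.1 := fun x => by
    simp only [f, Matrix.mul_assoc, ← Matrix.mul_assoc (x.2 : Matrix (Fin m) (Fin m) F),
      ← Units.val_mul, mul_inv_cancel, Units.val_one, Matrix.one_mul, hBP]
  have hf : Function.Injective f := by
    rintro ⟨M, G⟩ ⟨M', G'⟩ h
    obtain rfl : M = M' := Subtype.ext <| by rw [← hprod (M, G), ← hprod (M', G'), h]
    exact Prod.ext rfl <| Units.ext <|
      mul_left_cancel_of_injective_toLin' (hB M) (congrArg Prod.fst h)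
  calc _ = Nat.card ({M : Matrix ι κ F // M.rank = m} × GL (Fin m) F) :=
        (Nat.card_prod ..).symm
    _ ≤ Nat.card (Matrix ι (Fin m) F × Matrix (Fin m) κ F) :=
        Nat.card_le_card_of_injective f hf
    _ = _ := by
      simp only [Nat.card_prod, Matrix, Nat.card_fun]
      simp only [Nat.card_eq_fintype_card, Fintype.card_fin, ← pow_mul]
      ring

theorem pow_mul_self_le_two_pow_mul_card_GL (m : ℕ) :
    q ^ (m * m) ≤ 2 ^ m * Nat.card (GL (Fin m) F) := by
  have hq : 2 ≤ q := Fintype.one_lt_card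
  rw [card_GL_field, pow_mul, ← Fin.prod_const m (q ^ m), ← Fin.prod_const m 2,
    ← Finset.prod_mul_distrib]
  refine Finset.prod_le_prod' fun i _ => ?_
  have : 2 * q ^ (i : ℕ) ≤ q ^ m :=
    calc 2 * q ^ (i : ℕ) ≤ q ^ ((i : ℕ) + 1) := by rw [pow_succ']; gcongr
      _ ≤ q ^ m := Nat.pow_le_pow_right (by omega) i.isLt
  omega

theorem card_rank_eq_mul_pow_le (m : ℕ) :
    Nat.card {M : Matrix ι κ F // M.rank = m} * q ^ (m * m) ≤
      2 ^ m * q ^ (Fintype.card ι * m + m * Fintype.card κ) :=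
  calc _ ≤ Nat.card {M : Matrix ι κ F // M.rank = m} * (2 ^ m * Nat.card (GL (Fin m) F)) :=
        Nat.mul_le_mul_left _ (pow_mul_self_le_two_pow_mul_card_GL m)
    _ = 2 ^ m * (Nat.card {M : Matrix ι κ F // M.rank = m} * Nat.card (GL (Fin m) F)) := by ring
    _ ≤ _ := by rw [pow_add]; exact Nat.mul_le_mul_left _ (card_rank_eq_mul_card_GL_le m)

end Finite

end Matrix

theorem sq_add_sq_le_of_le {d n m k : ℕ} (hm : m ≤ n) (hk : k ≤ n) :
    m ^ 2 + k ^ 2 ≤ (d + 1) * n * m + 2 * n * k := by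
  nlinarith [Nat.mul_le_mul_right m hm, Nat.mul_le_mul_right k hk]

theorem exponent_le_of_lt {d n m k : ℕ} (hd : 1 ≤ d) (hm : m < n) (hk : k ≤ n) :
    (d + 1) * n * m + 2 * n * k - m ^ 2 - k ^ 2 ≤ (d + 1) * n ^ 2 - (d - 1) * n - 1 := by
  have hn : (d - 1) * n + 1 ≤ (d + 1) * n ^ 2 := by
    have : (d + 1) * n ≤ (d + 1) * n ^ 2 := Nat.mul_le_mul_left _ (Nat.le_self_pow two_ne_zero n)
    zify [hd] at this ⊢
    nlinarith
  rw [Nat.sub_sub, Nat.sub_sub]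
  zify [hd, sq_add_sq_le_of_le (d := d) hm.le hk, hn]
  have hm' : (m : ℤ) + 1 ≤ n := by exact_mod_cast hm
  -- the difference is `(n - k)² + (n - 1 - m)(d n + 1 - m)`
  nlinarith [sq_nonneg ((n : ℤ) - k),
    mul_nonneg (sub_nonneg.mpr hm') (by nlinarith : (0 : ℤ) ≤ d * n + 1 - m)]

theorem card_rank_eq_mul_card_rank_eq_le {d n m k : ℕ} (F : Type*) [Field F] [Fintype F]
    (hm : m ≤ n) (hk : k ≤ n) :
    Nat.card {M : Matrix (Fin n) (Fin (d * n)) F // M.rank = m} *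
        Nat.card {Y : Matrix (Fin n) (Fin n) F // Y.rank = k} ≤
      2 ^ (m + k) * Fintype.card F ^ ((d + 1) * n * m + 2 * n * k - m ^ 2 - k ^ 2) := by
  set q := Fintype.card F
  have hM := Matrix.card_rank_eq_mul_pow_le (F := F) (ι := Fin n) (κ := Fin (d * n)) m
  have hY := Matrix.card_rank_eq_mul_pow_le (F := F) (ι := Fin n) (κ := Fin n) k
  simp only [Fintype.card_fin] at hM hY
  have hexp : (d + 1) * n * m + 2 * n * k - m ^ 2 - k ^ 2 + (m * m + k * k) =
      n * m + m * (d * n) + (n * k + k * n) := by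
    zify [sq_add_sq_le_of_le (d := d) hm hk, Nat.sub_sub]
    ring
  refine Nat.le_of_mul_le_mul_right (c := q ^ (m * m + k * k)) ?_ (by positivity)
  calc _ = (_ * q ^ (m * m)) * (_ * q ^ (k * k)) := by ring
    _ ≤ (2 ^ m * q ^ (n * m + m * (d * n))) * (2 ^ k * q ^ (n * k + k * n)) :=
      Nat.mul_le_mul hM hY
    _ = _ := by rw [mul_assoc (2 ^ (m + k)), ← pow_add, hexp]; ring

theorem stmt_13_general (d n : ℕ) (hd : 1 ≤ d) :
    ∃ C : ℕ, 0 < C ∧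
      ∀ (m k q : ℕ) (F : Type) [Field F] [Fintype F], Fintype.card F = q →
        m < n → k ≤ n → (m, k) ≠ (0, 0) →
        Nat.card {M : Matrix (Fin n) (Fin (d * n)) F // M.rank = m} *
          Nat.card {Y : Matrix (Fin n) (Fin n) F // Y.rank = k} ≤
            C * q ^ ((d + 1) * n * m + 2 * n * k - m ^ 2 - k ^ 2) ∧
        C * q ^ ((d + 1) * n * m + 2 * n * k - m ^ 2 - k ^ 2) ≤
          C * q ^ ((d + 1) * n ^ 2 - (d - 1) * n - 1) := by
  refine ⟨4 ^ n, by positivity, fun m k q F _ _ hq hm hk _ => ⟨?_, ?_⟩⟩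
  · have h4 : 2 ^ (m + k) ≤ 4 ^ n :=
      calc 2 ^ (m + k) ≤ 2 ^ (2 * n) := Nat.pow_le_pow_right two_pos (by omega)
        _ = 4 ^ n := by rw [pow_mul]; rfl
    subst hq
    exact (card_rank_eq_mul_card_rank_eq_le F hm.le hk).trans (Nat.mul_le_mul_right _ h4)
  · exact Nat.mul_le_mul_left _ <|
      Nat.pow_le_pow_right (hq ▸ Fintype.card_pos) (exponent_le_of_lt hd hm hk)

/-- For 0 ≤ m < n, 0 ≤ k ≤ n, (m,k) ≠ (0,0), the number of pairs (M,Y) with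
M ∈ M_{n×dn}(F_q) of rank m and Y ∈ M_n(F_q) of rank k is at most
C·q^{(d+1)nm + 2nk − m² − k²} ≤ C·q^{(d+1)n² − (d−1)n − 1}. -/
theorem stmt_13 (d n : ℕ) (hd : 1 ≤ d) (hn : 2 ≤ n) :
    ∃ C : ℕ, 0 < C ∧
      ∀ (m k q : ℕ) (F : Type) [Field F] [Fintype F], Fintype.card F = q →
        m < n → k ≤ n → (m, k) ≠ (0, 0) →
        Nat.card {M : Matrix (Fin n) (Fin (d * n)) F // M.rank = m} *
          Nat.card {Y : Matrix (Fin n) (Fin n) F // Y.rank = k} ≤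
            C * q ^ ((d + 1) * n * m + 2 * n * k - m ^ 2 - k ^ 2) ∧
        C * q ^ ((d + 1) * n * m + 2 * n * k - m ^ 2 - k ^ 2) ≤
          C * q ^ ((d + 1) * n ^ 2 - (d - 1) * n - 1) :=
  stmt_13_general d n hd
end

section
/- The second largest eigenvalue λ of the sum-product digraph G on M_n(F_q)^{d+1} satisfies |λ|² ≤ C·q^{2dn² − (d−1)n − 1}, i.e., G is a (q^{(d+1)n²}, q^{dn²}, C·q^{dn² − (d−1)n/2 − 1/2})-digraph for some constant C independent of q. -/
/-!
Take the partial Fourier transform of an eigenvector `w` in the last coordinate, using the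
additive characters `X ↦ ψ (tr (S * X))` of `Mₙ(F)`. The adjacency operator maps the component at
`-S` to the component at `S` through the kernel `(a, b) ↦ ψ (tr (S * ∑ aₖ bₖ))` on `Mₙ(F)ᵈ`. Its
squared operator norm is at most `q^{dn²}` times the number of `b` with `bₖ S = 0` for all `k`,
which is at most `q^{dn(n-1)}` when `S ≠ 0`. So a nonzero component at some `S ≠ 0` forces
`|μ|² ≤ q^{(2n-1)nd}`. If all those components vanish, `w` does not depend on the last
coordinate, and then `μ = 0` or `μ = q^{dn²}`.
-/

open Finset Matrix

section Characters

variable {F U V : Type*} [Field F] [AddCommGroup U] [Module F U] [AddCommGroup V] [Module F V]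

lemma AddChar.comp_linearMap_eq_zero_iff {ψ : AddChar F ℂ} (hψ : ψ ≠ 0) (f : U →ₗ[F] F) :
    ψ.compAddMonoidHom f.toAddMonoidHom = 0 ↔ f = 0 := by
  refine ⟨fun h => ?_, fun h => by ext; simp [h]⟩
  by_contra hf
  obtain ⟨u, hu⟩ := DFunLike.ne_iff.mp hf
  obtain ⟨x, hx⟩ := AddChar.ne_zero_iff.mp hψ
  refine hx ?_
  have := DFunLike.congr_fun h ((x / f u) • u)
  simpa [div_mul_cancel₀ x hu] using this

variable [Fintype U] [Fintype V]

open Classical in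
lemma sum_addChar_linearMap {ψ : AddChar F ℂ} (hψ : ψ ≠ 0) (f : U →ₗ[F] F) :
    ∑ u, ψ (f u) = if f = 0 then (Fintype.card U : ℂ) else 0 := by
  simp_rw [← AddChar.comp_linearMap_eq_zero_iff hψ f]
  exact (ψ.compAddMonoidHom f.toAddMonoidHom).sum_eq_ite

lemma norm_sum_sum_sub_mem_le {G : Type*} [AddCommGroup G] [Fintype G] [DecidableEq G]
    (K : Finset G) (g : G → ℂ) :
    ‖∑ b, ∑ b', if b - b' ∈ K then g b * starRingEnd ℂ (g b') else 0‖
      ≤ #K * ∑ b, ‖g b‖ ^ 2 := by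
  have reindex : ∀ b, (∑ b', if b - b' ∈ K then g b * starRingEnd ℂ (g b') else 0)
      = ∑ k ∈ K, g b * starRingEnd ℂ (g (b - k)) := by
    intro b
    rw [← Fintype.sum_equiv (Equiv.subLeft b) (fun k => if k ∈ K then
      g b * starRingEnd ℂ (g (b - k)) else 0) _ (fun k => by simp), sum_ite_mem,
      univ_inter]
  simp_rw [reindex]
  rw [sum_comm]
  refine (norm_sum_le _ _).trans ?_
  rw [← nsmul_eq_mul]
  refine sum_le_card_nsmul _ _ _ fun k _ => (norm_sum_le _ _).trans ?_
  have shift : ∑ b, ‖g (b - k)‖ ^ 2 = ∑ b, ‖g b‖ ^ 2 :=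
    Fintype.sum_equiv (Equiv.subRight k) _ _ fun _ => rfl
  calc ∑ b, ‖g b * starRingEnd ℂ (g (b - k))‖
      ≤ ∑ b, (‖g b‖ ^ 2 + ‖g (b - k)‖ ^ 2) / 2 := by
        refine sum_le_sum fun b _ => ?_
        rw [norm_mul, Complex.norm_conj]
        nlinarith [sq_nonneg (‖g b‖ - ‖g (b - k)‖)]
    _ = ∑ b, ‖g b‖ ^ 2 := by
        rw [← sum_div, sum_add_distrib, shift]; ring

open Classical in
lemma sum_norm_sq_sum_addChar_bilin_le [Finite F] {ψ : AddChar F ℂ} (hψ : ψ ≠ 0)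
    (B : U →ₗ[F] V →ₗ[F] F) (g : V → ℂ) :
    ∑ a, ‖∑ b, ψ (B a b) * g b‖ ^ 2
      ≤ Fintype.card U * #{c | B.flip c = 0} * ∑ b, ‖g b‖ ^ 2 := by
  -- expanding the square, orthogonality in `a` keeps only the pairs with `b - b'` in the kernel
  have expand : ∑ a, ((‖∑ b, ψ (B a b) * g b‖ ^ 2 : ℝ) : ℂ)
      = Fintype.card U * ∑ b, ∑ b', if b - b' ∈ ({c | B.flip c = 0} : Finset V)
          then g b * starRingEnd ℂ (g b') else 0 := by
    simp_rw [Complex.ofReal_pow, ← Complex.mul_conj', map_sum, map_mul,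
      ← AddChar.map_neg_eq_conj, sum_mul_sum, mul_sum]
    rw [sum_comm]
    refine sum_congr rfl fun b _ => ?_
    rw [sum_comm]
    refine sum_congr rfl fun b' _ => ?_
    have hchar : ∀ a, ψ (B a b) * g b * (ψ (-B a b') * starRingEnd ℂ (g b'))
        = g b * starRingEnd ℂ (g b') * ψ (B.flip (b - b') a) := by
      intro a
      rw [map_sub, LinearMap.sub_apply, sub_eq_add_neg, AddChar.map_add_eq_mul,
        LinearMap.flip_apply, LinearMap.flip_apply]
      ring
    simp only [hchar, ← mul_sum, sum_addChar_linearMap hψ, mem_filter_univ]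
    split_ifs <;> ring
  calc ∑ a, ‖∑ b, ψ (B a b) * g b‖ ^ 2
      = ‖∑ a, ((‖∑ b, ψ (B a b) * g b‖ ^ 2 : ℝ) : ℂ)‖ := by
        rw [← Complex.ofReal_sum, Complex.norm_real, Real.norm_of_nonneg (by positivity)]
    _ ≤ Fintype.card U * (#{c | B.flip c = 0} * ∑ b, ‖g b‖ ^ 2) := by
        rw [expand, norm_mul, Complex.norm_natCast]
        gcongr
        exact norm_sum_sum_sub_mem_le _ g
    _ = _ := by ring

end Characters

section Matrices

lemma Fintype.card_fun_matrix {ι κ R : Type*} [Fintype ι] [DecidableEq ι] [Fintype κ]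
    [DecidableEq κ] [Fintype R] : Fintype.card (κ → Matrix ι ι R)
      = Fintype.card R ^ (Fintype.card ι * Fintype.card ι * Fintype.card κ) := by
  rw [Fintype.card_fun, show Fintype.card (Matrix ι ι R) = Fintype.card (ι → ι → R) from rfl,
    Fintype.card_fun, Fintype.card_fun, ← pow_mul, ← pow_mul]
  ring_nf

variable {ι κ F : Type*} [Fintype ι] [DecidableEq ι] [Field F]

lemma Matrix.eq_zero_of_forall_trace_mul_eq_zero {Y : Matrix ι ι F}
    (h : ∀ X, trace (X * Y) = 0) : Y = 0 :=
  Matrix.ext_iff_trace_mul_left.mpr fun X => by simp [h X]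

variable [Fintype κ] [DecidableEq κ]

def Matrix.traceSumMulForm (S : Matrix ι ι F) :
    (κ → Matrix ι ι F) →ₗ[F] (κ → Matrix ι ι F) →ₗ[F] F :=
  LinearMap.mk₂ F (fun a b => trace (S * ∑ k, a k * b k))
    (fun a a' b => by simp only [Pi.add_apply, add_mul, sum_add_distrib, mul_add, trace_add])
    (fun c a b => by simp only [Pi.smul_apply, smul_mul_assoc, ← smul_sum, mul_smul_comm,
      trace_smul])
    (fun a b b' => by simp only [Pi.add_apply, mul_add, sum_add_distrib, trace_add])
    (fun c a b => by simp only [Pi.smul_apply, mul_smul_comm, ← smul_sum, trace_smul])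

lemma Matrix.mul_eq_zero_of_traceSumMulForm_flip_eq_zero {S : Matrix ι ι F}
    {b : κ → Matrix ι ι F} (hb : (traceSumMulForm S).flip b = 0) (k : κ) : b k * S = 0 := by
  refine eq_zero_of_forall_trace_mul_eq_zero fun X => ?_
  have := LinearMap.congr_fun hb (Pi.single k X)
  simp only [traceSumMulForm, LinearMap.flip_apply, LinearMap.mk₂_apply, LinearMap.zero_apply,
    Pi.single_apply, ite_mul, zero_mul, sum_ite_eq', mem_univ, if_true] at this
  rw [trace_mul_comm, Matrix.mul_assoc]
  rwa [trace_mul_cycle'] at this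

variable [Fintype F]

open Classical in
lemma Matrix.card_filter_vecMul_eq_zero_le {S : Matrix ι ι F} (hS : S ≠ 0) :
    #{v : ι → F | v ᵥ* S = 0} ≤ Fintype.card F ^ (Fintype.card ι - 1) := by
  classical
  set W := LinearMap.ker S.vecMulLinear
  have hW : W ≠ ⊤ := by
    intro htop
    refine hS (Matrix.ext fun i j => ?_)
    have hrow : Pi.single i 1 ᵥ* S = 0 := LinearMap.mem_ker.mp (htop ▸ Submodule.mem_top)
    simpa using congr_fun hrow j
  have hdim : Module.finrank F W ≤ Fintype.card ι - 1 := by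
    have := Submodule.finrank_lt hW
    rw [Module.finrank_fintype_fun_eq_card] at this
    omega
  calc #{v : ι → F | v ᵥ* S = 0} = Fintype.card W := by
        rw [← Fintype.card_subtype]
        exact Fintype.card_congr
          (Equiv.subtypeEquivRight fun v => by rw [LinearMap.mem_ker]; rfl)
    _ = Fintype.card F ^ Module.finrank F W := Module.card_eq_pow_finrank
    _ ≤ Fintype.card F ^ (Fintype.card ι - 1) := Nat.pow_le_pow_right Fintype.card_pos hdim

open Classical in
lemma Matrix.card_filter_forall_mul_eq_zero_le {S : Matrix ι ι F} (hS : S ≠ 0) :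
    #{b : κ → Matrix ι ι F | ∀ k, b k * S = 0}
      ≤ Fintype.card F ^ ((Fintype.card ι - 1) * Fintype.card ι * Fintype.card κ) := by
  have rows : {x : Matrix ι ι F // x * S = 0} ≃ (ι → {v : ι → F // v ᵥ* S = 0}) :=
    (Equiv.subtypeEquivRight fun x => funext_iff).trans
      (@Equiv.subtypePiEquivPi ι (fun _ => ι → F) (fun _ v => v ᵥ* S = 0))
  have e : {b : κ → Matrix ι ι F // ∀ k, b k * S = 0}
      ≃ (κ → ι → {v : ι → F // v ᵥ* S = 0}) :=
    Equiv.subtypePiEquivPi.trans (Equiv.piCongrRight fun _ => rows)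
  rw [← Fintype.card_subtype, Fintype.card_congr e, Fintype.card_pi, prod_const,
    Fintype.card_pi, prod_const, Fintype.card_subtype, card_univ, card_univ, pow_mul, pow_mul]
  gcongr
  exact card_filter_vecMul_eq_zero_le hS

open Classical in
lemma Matrix.sum_addChar_trace_mul {ψ : AddChar F ℂ} (hψ : ψ ≠ 0) (x : Matrix ι ι F) :
    ∑ S, ψ (trace (S * x)) = if x = 0 then (Fintype.card (Matrix ι ι F) : ℂ) else 0 := by
  have := sum_addChar_linearMap hψ (traceLinearMap ι F F ∘ₗ LinearMap.mulRight F x)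
  simp only [LinearMap.comp_apply, LinearMap.mulRight_apply, traceLinearMap_apply] at this
  rw [this]
  refine if_congr ⟨fun h => eq_zero_of_forall_trace_mul_eq_zero fun S => ?_, fun h => ?_⟩ rfl rfl
  · simpa using LinearMap.congr_fun h S
  · ext S; simp [h]

lemma Matrix.eq_of_forall_sum_addChar_trace_mul_eq_zero {ψ : AddChar F ℂ} (hψ : ψ ≠ 0)
    {v : Matrix ι ι F → ℂ} (h : ∀ S ≠ 0, ∑ t, ψ (trace (S * t)) * v t = 0)
    (t u : Matrix ι ι F) : v t = v u := by
  -- Fourier inversion: only the trivial character contributes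
  have inversion : ∀ t, (Fintype.card (Matrix ι ι F) : ℂ) * v t = ∑ u, v u := by
    intro t
    calc (Fintype.card (Matrix ι ι F) : ℂ) * v t
        = ∑ u, v u * ∑ S, ψ (trace (S * (u - t))) := by
          rw [sum_eq_single t (fun u _ hu => by
              rw [sum_addChar_trace_mul hψ, if_neg (sub_ne_zero.mpr hu), mul_zero]) (by simp),
            sub_self, sum_addChar_trace_mul hψ, if_pos rfl, mul_comm]
      _ = ∑ S, ψ (trace (S * -t)) * ∑ u, ψ (trace (S * u)) * v u := by
          simp_rw [mul_sum]
          rw [sum_comm]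
          refine sum_congr rfl fun u _ => sum_congr rfl fun S _ => ?_
          rw [sub_eq_neg_add, Matrix.mul_add, trace_add, AddChar.map_add_eq_mul]
          ring
      _ = ∑ u, v u := by
          rw [sum_eq_single 0 (fun S _ hS => by rw [h S hS, mul_zero]) (by simp)]
          simp
  have hcard : (Fintype.card (Matrix ι ι F) : ℂ) ≠ 0 := Nat.cast_ne_zero.mpr Fintype.card_ne_zero
  exact mul_left_cancel₀ hcard ((inversion t).trans (inversion u).symm)

lemma sum_norm_sq_sum_addChar_trace_le {ψ : AddChar F ℂ} (hψ : ψ ≠ 0) {S : Matrix ι ι F}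
    (hS : S ≠ 0) (g : (κ → Matrix ι ι F) → ℂ) :
    ∑ a : κ → Matrix ι ι F, ‖∑ b, ψ (trace (S * ∑ k, a k * b k)) * g b‖ ^ 2
      ≤ (Fintype.card F : ℝ) ^ ((2 * Fintype.card ι - 1) * Fintype.card ι * Fintype.card κ)
        * ∑ b, ‖g b‖ ^ 2 := by
  classical
  refine (sum_norm_sq_sum_addChar_bilin_le hψ (traceSumMulForm S) g).trans ?_
  gcongr
  have hker := (card_le_card (monotone_filter_right univ
    fun _ _ hb => mul_eq_zero_of_traceSumMulForm_flip_eq_zero hb)).trans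
    (card_filter_forall_mul_eq_zero_le (κ := κ) hS)
  have hexp : Fintype.card ι * Fintype.card ι * Fintype.card κ
      + (Fintype.card ι - 1) * Fintype.card ι * Fintype.card κ
      = (2 * Fintype.card ι - 1) * Fintype.card ι * Fintype.card κ := by
    rcases Nat.eq_zero_or_pos (Fintype.card ι) with h | h
    · simp [h]
    · rw [← add_mul, ← add_mul]; congr 2; omega
  rw [Fintype.card_fun_matrix, ← hexp, pow_add]
  exact_mod_cast Nat.mul_le_mul_left _ hker

end Matrices

section SumProduct

open Classical in
noncomputable def sumProductAdj (κ ι F : Type*) [Fintype κ] [Fintype ι] [Field F] :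
    Matrix ((κ → Matrix ι ι F) × Matrix ι ι F) ((κ → Matrix ι ι F) × Matrix ι ι F) ℂ :=
  of fun x y => if ∑ k, x.1 k * y.1 k = x.2 + y.2 then 1 else 0

noncomputable def fourierSnd {α ι F : Type*} [Fintype ι] [DecidableEq ι] [Field F] [Fintype F]
    (ψ : AddChar F ℂ) (S : Matrix ι ι F) (v : α × Matrix ι ι F → ℂ) (a : α) : ℂ :=
  ∑ t, ψ (trace (S * t)) * v (a, t)

variable {ι κ F : Type*} [Fintype ι] [DecidableEq ι] [Fintype κ] [DecidableEq κ]
  [Field F] [Fintype F]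

lemma sumProductAdj_mulVec_apply (w : (κ → Matrix ι ι F) × Matrix ι ι F → ℂ)
    (x : (κ → Matrix ι ι F) × Matrix ι ι F) :
    (sumProductAdj κ ι F *ᵥ w) x = ∑ b, w (b, ∑ k, x.1 k * b k - x.2) := by
  simp only [mulVec, dotProduct, sumProductAdj, of_apply, Fintype.sum_prod_type, ite_mul,
    one_mul, zero_mul]
  refine sum_congr rfl fun b _ => ?_
  rw [sum_eq_single (∑ k, x.1 k * b k - x.2) (fun t _ ht => if_neg fun h => ht (by rw [h]; abel))
    (by simp), if_pos (by abel)]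

lemma fourierSnd_sumProductAdj_mulVec (ψ : AddChar F ℂ) (S : Matrix ι ι F)
    (v : (κ → Matrix ι ι F) × Matrix ι ι F → ℂ) (a : κ → Matrix ι ι F) :
    fourierSnd ψ S (sumProductAdj κ ι F *ᵥ v) a
      = ∑ b, ψ (trace (S * ∑ k, a k * b k)) * fourierSnd ψ (-S) v b := by
  have hchar : ∀ c t : Matrix ι ι F,
      ψ (trace (S * t)) = ψ (trace (S * c)) * ψ (trace (-S * (c - t))) := fun c t => by
    rw [← AddChar.map_add_eq_mul, ← trace_add]
    congr 2
    noncomm_ring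
  simp only [fourierSnd, sumProductAdj_mulVec_apply,
    mul_sum (s := (univ : Finset (κ → Matrix ι ι F)))]
  rw [sum_comm]
  refine sum_congr rfl fun b _ => ?_
  rw [mul_sum (s := (univ : Finset (Matrix ι ι F)))]
  refine Fintype.sum_equiv (Equiv.subLeft (∑ k, a k * b k)) _ _ fun t => ?_
  rw [Equiv.subLeft_apply, hchar (∑ k, a k * b k) t, mul_assoc]

lemma fourierSnd_eq_of_mulVec_eq {ψ : AddChar F ℂ} {w : (κ → Matrix ι ι F) × Matrix ι ι F → ℂ}
    {μ : ℂ} (hμw : sumProductAdj κ ι F *ᵥ w = μ • w) (S : Matrix ι ι F) (a : κ → Matrix ι ι F) :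
    μ * fourierSnd ψ S w a
      = ∑ b, ψ (trace (S * ∑ k, a k * b k)) * fourierSnd ψ (-S) w b := by
  rw [← fourierSnd_sumProductAdj_mulVec, hμw]
  simp only [fourierSnd, Pi.smul_apply, smul_eq_mul, mul_sum]
  exact sum_congr rfl fun t _ => by ring

lemma norm_sq_le_of_fourierSnd_ne_zero {ψ : AddChar F ℂ} (hψ : ψ ≠ 0)
    {w : (κ → Matrix ι ι F) × Matrix ι ι F → ℂ} {μ : ℂ}
    (hμw : sumProductAdj κ ι F *ᵥ w = μ • w) {S : Matrix ι ι F} (hS : S ≠ 0)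
    (hSw : fourierSnd ψ S w ≠ 0) :
    ‖μ‖ ^ 2 ≤
      (Fintype.card F : ℝ) ^ ((2 * Fintype.card ι - 1) * Fintype.card ι * Fintype.card κ) := by
  set c := (Fintype.card F : ℝ) ^ ((2 * Fintype.card ι - 1) * Fintype.card ι * Fintype.card κ)
  have bound : ∀ T : Matrix ι ι F, T ≠ 0 →
      ‖μ‖ ^ 2 * ∑ a, ‖fourierSnd ψ T w a‖ ^ 2 ≤ c * ∑ a, ‖fourierSnd ψ (-T) w a‖ ^ 2 := by
    intro T hT
    calc ‖μ‖ ^ 2 * ∑ a, ‖fourierSnd ψ T w a‖ ^ 2 = ∑ a, ‖μ * fourierSnd ψ T w a‖ ^ 2 := by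
          simp only [mul_sum, norm_mul, mul_pow]
      _ = ∑ a : κ → Matrix ι ι F,
            ‖∑ b, ψ (trace (T * ∑ k, a k * b k)) * fourierSnd ψ (-T) w b‖ ^ 2 := by
          simp_rw [fourierSnd_eq_of_mulVec_eq hμw]
      _ ≤ _ := sum_norm_sq_sum_addChar_trace_le hψ hT _
  have h₁ := bound S hS
  have h₂ := bound (-S) (neg_ne_zero.mpr hS)
  rw [neg_neg] at h₂
  obtain ⟨a, ha⟩ := Function.ne_iff.mp hSw
  have hpos : 0 < ∑ a, ‖fourierSnd ψ S w a‖ ^ 2 + ∑ a, ‖fourierSnd ψ (-S) w a‖ ^ 2 :=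
    add_pos_of_pos_of_nonneg
      (sum_pos' (fun _ _ => by positivity) ⟨a, mem_univ _, pow_pos (norm_pos_iff.mpr ha) 2⟩)
      (sum_nonneg fun _ _ => by positivity)
  exact le_of_mul_le_mul_right (by linarith) hpos

lemma eq_zero_or_eq_card_of_forall_fourierSnd_eq_zero {ψ : AddChar F ℂ} (hψ : ψ ≠ 0)
    {w : (κ → Matrix ι ι F) × Matrix ι ι F → ℂ} (hw : w ≠ 0) {μ : ℂ}
    (hμw : sumProductAdj κ ι F *ᵥ w = μ • w) (h : ∀ S ≠ 0, fourierSnd ψ S w = 0) :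
    μ = 0 ∨ μ = Fintype.card (κ → Matrix ι ι F) := by
  have hconst : ∀ a t u, w (a, t) = w (a, u) := fun a =>
    eq_of_forall_sum_addChar_trace_mul_eq_zero hψ fun S hS => congr_fun (h S hS) a
  have hμx : ∀ x, μ * w x = ∑ b, w (b, 0) := fun x => by
    rw [← smul_eq_mul, ← Pi.smul_apply, ← hμw, sumProductAdj_mulVec_apply]
    exact sum_congr rfl fun b _ => hconst b _ 0
  refine or_iff_not_imp_left.mpr fun hμ => ?_
  have hwconst : ∀ x y, w x = w y := fun x y =>
    mul_left_cancel₀ hμ ((hμx x).trans (hμx y).symm)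
  obtain ⟨x, hx⟩ := Function.ne_iff.mp hw
  refine mul_right_cancel₀ hx ((hμx x).trans ?_)
  rw [sum_congr rfl fun b _ => hwconst (b, 0) x, sum_const, card_univ, nsmul_eq_mul]

theorem norm_sq_le_of_sumProductAdj_mulVec_eq {w : (κ → Matrix ι ι F) × Matrix ι ι F → ℂ}
    (hw : w ≠ 0) {μ : ℂ} (hμw : sumProductAdj κ ι F *ᵥ w = μ • w)
    (hμ : μ ≠ Fintype.card (κ → Matrix ι ι F)) :
    ‖μ‖ ^ 2 ≤
      (Fintype.card F : ℝ) ^ ((2 * Fintype.card ι - 1) * Fintype.card ι * Fintype.card κ) := by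
  obtain ⟨ψ, hψ⟩ := AddChar.exists_apply_ne_zero.mpr (one_ne_zero : (1 : F) ≠ 0)
  replace hψ : ψ ≠ 0 := AddChar.ne_zero_iff.mpr ⟨1, hψ⟩
  by_cases h : ∀ S ≠ 0, fourierSnd ψ S w = 0
  · rcases eq_zero_or_eq_card_of_forall_fourierSnd_eq_zero hψ hw hμw h with rfl | rfl
    · rw [norm_zero, zero_pow two_ne_zero]; positivity
    · exact absurd rfl hμ
  · push Not at h
    obtain ⟨S, hS, hSw⟩ := h
    exact norm_sq_le_of_fourierSnd_ne_zero hψ hμw hS hSw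

end SumProduct

open Classical in
theorem stmt_15_general (d n : ℕ) :
    ∃ C : ℝ, 0 < C ∧
      ∀ (q : ℕ) (F : Type) [Field F] [Fintype F], Fintype.card F = q → Odd q →
        ∀ μ : ℂ, μ ≠ (q : ℂ) ^ (d * n ^ 2) →
          (∃ w : ((Fin d → Matrix (Fin n) (Fin n) F) × Matrix (Fin n) (Fin n) F) → ℂ,
            w ≠ 0 ∧
            (Matrix.of fun x y : (Fin d → Matrix (Fin n) (Fin n) F) ×
                Matrix (Fin n) (Fin n) F =>
              if ∑ i, x.1 i * y.1 i = x.2 + y.2 then (1 : ℂ) else 0).mulVec w = μ • w) →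
          ‖μ‖ ^ 2 ≤ C * (q : ℝ) ^ (2 * d * n ^ 2 - (d - 1) * n - 1) := by
  refine ⟨1, one_pos, fun q F _ _ hq _ μ hμ ⟨w, hw, hμw⟩ => ?_⟩
  subst hq
  have hμ' : μ ≠ Fintype.card (Fin d → Matrix (Fin n) (Fin n) F) := by
    rw [Fintype.card_fun_matrix, Fintype.card_fin, Fintype.card_fin, Nat.cast_pow]
    convert hμ using 2
    ring
  have hexp : (2 * n - 1) * n * d ≤ 2 * d * n ^ 2 - (d - 1) * n - 1 := by
    rcases Nat.eq_zero_or_pos d with rfl | hd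
    · simp
    rcases Nat.eq_zero_or_pos n with rfl | hn
    · simp
    obtain ⟨e, rfl⟩ : ∃ e, d = e + 1 := ⟨d - 1, by omega⟩
    obtain ⟨m, rfl⟩ : ∃ m, n = m + 1 := ⟨n - 1, by omega⟩
    rw [show 2 * (m + 1) - 1 = 2 * m + 1 by omega, Nat.add_sub_cancel,
      show 2 * (e + 1) * (m + 1) ^ 2 = (2 * m + 1) * (m + 1) * (e + 1) + m + e * (m + 1) + 1 by ring]
    omega
  rw [one_mul]
  calc ‖μ‖ ^ 2 ≤ (Fintype.card F : ℝ) ^ ((2 * n - 1) * n * d) := by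
        simpa using norm_sq_le_of_sumProductAdj_mulVec_eq hw hμw hμ'
    _ ≤ _ := pow_le_pow_right₀ (by exact_mod_cast Fintype.card_pos) hexp

open Classical in
/-- Every eigenvalue μ ≠ q^{dn²} of the adjacency matrix of the sum-product digraph on
M_n(F_q)^{d+1} satisfies |μ|² ≤ C·q^{2dn² − (d−1)n − 1} for a constant C independent of q. -/
theorem stmt_15 (d n : ℕ) (hd : 1 ≤ d) (hn : 2 ≤ n) :
    ∃ C : ℝ, 0 < C ∧
      ∀ (q : ℕ) (F : Type) [Field F] [Fintype F], Fintype.card F = q → Odd q →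
        ∀ μ : ℂ, μ ≠ (q : ℂ) ^ (d * n ^ 2) →
          (∃ w : ((Fin d → Matrix (Fin n) (Fin n) F) × Matrix (Fin n) (Fin n) F) → ℂ,
            w ≠ 0 ∧
            (Matrix.of fun x y : (Fin d → Matrix (Fin n) (Fin n) F) ×
                Matrix (Fin n) (Fin n) F =>
              if ∑ i, x.1 i * y.1 i = x.2 + y.2 then (1 : ℂ) else 0).mulVec w = μ • w) →
          ‖μ‖ ^ 2 ≤ C * (q : ℝ) ^ (2 * d * n ^ 2 - (d - 1) * n - 1) :=
  stmt_15_general d n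
end

section
/- Let P be a set of points and L a set of lines in M_2(F_q) × M_2(F_q), where the line determined by (A,B) ∈ M_2(F_q)² is {(X,Y) : AX + B = Y}. Then the number of incidences satisfies I(P,L) ≤ |P||L|/q⁴ + √2 · q^{7/2} · √(|P||L|). -/
/-!
Let `n p` be the number of lines of `L` through the point `p`, over any finite ring `R`.
Every line has `|R|` points, so `∑ n = |L| |R|`. Two lines `(A, B)`, `(A', B')` meet in the
solutions of `(A - A') X = B' - B`: at most one when `A - A'` is a unit, and, for fixed `A'`,
exactly `|R|` in total over all `B'`. Hence `∑ n² ≤ |L|² + |L| |R| · #nonunits`, i.e. the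
variance of `n` about its mean `|L| / |R|` is at most `|L| |R| · #nonunits`, and Cauchy–Schwarz
over `P` bounds `∑_{p ∈ P} n p` by `|P| |L| / |R| + √(|P| |L| |R| · #nonunits)`.
For `R = M₂(F_q)` we have `|R| = q⁴` and `q³ + q² - q ≤ 2 q³` singular matrices.
-/

open Finset

theorem Finset.sum_le_card_mul_add_sqrt {α : Type*} [Fintype α] (f : α → ℝ) (s : Finset α)
    (c : ℝ) : ∑ a ∈ s, f a ≤ #s * c + √(#s * ∑ a, (f a - c) ^ 2) := by
  have hdev : ∑ a ∈ s, (f a - c) ≤ √(#s * ∑ a, (f a - c) ^ 2) := by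
    refine (le_abs_self _).trans (Real.abs_le_sqrt ?_)
    refine (sq_sum_le_card_mul_sum_sq (s := s) (f := fun a => f a - c)).trans ?_
    exact mul_le_mul_of_nonneg_left
      (sum_le_sum_of_subset_of_nonneg (subset_univ s) fun _ _ _ => sq_nonneg _) (by positivity)
  rw [sum_sub_distrib, sum_const, nsmul_eq_mul] at hdev
  linarith

theorem card_nonunits_add_card_units (M : Type*) [Monoid M] [Finite M] :
    Nat.card (nonunits M) + Nat.card Mˣ = Nat.card M := by
  have hunits : Nat.card Mˣ = Nat.card ↥(nonunits M)ᶜ := by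
    rw [← Nat.card_range_of_injective Units.val_injective]
    congr 2
    ext x
    simp [nonunits, IsUnit]
  rw [hunits, Nat.card_coe_set_eq, Nat.card_coe_set_eq, Set.ncard_add_ncard_compl]

section FiniteRing

variable {R : Type*} [Ring R] [Fintype R] [DecidableEq R]

/-- A pair `(A, B)` stands for the line `{(X, Y) | A * X + B = Y}`. -/
def linesThrough (L : Finset (R × R)) (p : R × R) : Finset (R × R) :=
  {l ∈ L | l.1 * p.1 + l.2 = p.2}

theorem natCard_incidences_eq_sum_card_linesThrough (P L : Finset (R × R)) :
    Nat.card {pl : (R × R) × (R × R) // pl.1 ∈ P ∧ pl.2 ∈ L ∧ pl.2.1 * pl.1.1 + pl.2.2 = pl.1.2}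
      = ∑ p ∈ P, #(linesThrough L p) := by
  rw [Nat.card_eq_fintype_card, Fintype.card_subtype]
  have : ({pl | pl.1 ∈ P ∧ pl.2 ∈ L ∧ pl.2.1 * pl.1.1 + pl.2.2 = pl.1.2} : Finset _)
      = {pl ∈ P ×ˢ L | pl.2.1 * pl.1.1 + pl.2.2 = pl.1.2} := by
    ext; simp [and_assoc]
  rw [this, card_filter, sum_product]
  simp_rw [linesThrough, card_filter]

theorem card_line (A B : R) : #{p : R × R | A * p.1 + B = p.2} = Fintype.card R := by
  rw [card_filter, Fintype.sum_prod_type]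
  simp

theorem sum_card_linesThrough (L : Finset (R × R)) :
    ∑ p : R × R, #(linesThrough L p) = #L * Fintype.card R := by
  simp_rw [linesThrough, card_filter]
  rw [sum_comm]
  simp_rw [← card_filter, card_line, sum_const, smul_eq_mul]

theorem card_lines_inter (l l' : R × R) :
    #{p : R × R | l.1 * p.1 + l.2 = p.2 ∧ l'.1 * p.1 + l'.2 = p.2}
      = #{X | l.1 * X + l.2 = l'.1 * X + l'.2} := by
  rw [card_filter, card_filter, Fintype.sum_prod_type]
  simp only [ite_and, sum_ite_eq, mem_univ, if_true]
  exact sum_congr rfl fun X _ => if_congr eq_comm rfl rfl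

theorem sum_sq_card_linesThrough (L : Finset (R × R)) :
    ∑ p : R × R, #(linesThrough L p) ^ 2
      = ∑ l ∈ L, ∑ l' ∈ L, #{X | l.1 * X + l.2 = l'.1 * X + l'.2} :=
  calc ∑ p : R × R, #(linesThrough L p) ^ 2
      = ∑ p : R × R, ∑ l ∈ L, ∑ l' ∈ L,
          if l.1 * p.1 + l.2 = p.2 ∧ l'.1 * p.1 + l'.2 = p.2 then 1 else 0 := by
        simp_rw [linesThrough, card_filter, sq, sum_mul_sum, ite_zero_mul_ite_zero, mul_one]
    _ = ∑ l ∈ L, ∑ l' ∈ L, ∑ p : R × R,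
          if l.1 * p.1 + l.2 = p.2 ∧ l'.1 * p.1 + l'.2 = p.2 then 1 else 0 := by
        rw [sum_comm]
        exact sum_congr rfl fun _ _ => sum_comm
    _ = _ := by simp_rw [← card_filter, card_lines_inter]

theorem card_lines_inter_le_one {A B A' B' : R} (h : IsUnit (A - A')) :
    #{X | A * X + B = A' * X + B'} ≤ 1 := by
  have hsol : ∀ Z, A * Z + B = A' * Z + B' → (A - A') * Z = B' - B := fun Z hZ => by
    rw [sub_mul, sub_eq_sub_iff_add_eq_add, hZ, add_comm]
  refine card_le_one.2 fun X hX Y hY => h.mul_left_cancel ?_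
  simp only [mem_filter, mem_univ, true_and] at hX hY
  rw [hsol X hX, hsol Y hY]

theorem sum_card_lines_inter (A B A' : R) :
    ∑ B', #{X | A * X + B = A' * X + B'} = Fintype.card R := by
  simp_rw [card_filter]
  rw [sum_comm]
  simp_rw [← neg_add_eq_iff_eq_add (b := A * _ + B)]
  simp

theorem card_filter_sub_not_isUnit (A : R) :
    #{A' | ¬IsUnit (A - A')} = Nat.card (nonunits R) := by
  rw [Nat.subtype_card (p := (· ∈ nonunits R)) {C | ¬IsUnit C} (by simp [nonunits])]
  exact card_equiv (Equiv.subLeft A) fun A' => by simp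

theorem sum_card_lines_inter_le (l : R × R) (L : Finset (R × R)) :
    ∑ l' ∈ L, #{X | l.1 * X + l.2 = l'.1 * X + l'.2}
      ≤ #L + Fintype.card R * Nat.card (nonunits R) := by
  rw [← sum_filter_add_sum_filter_not L (fun l' => IsUnit (l.1 - l'.1))]
  refine add_le_add ?_ ?_
  · calc ∑ l' ∈ L with IsUnit (l.1 - l'.1), #{X | l.1 * X + l.2 = l'.1 * X + l'.2}
        ≤ ∑ l' ∈ L with IsUnit (l.1 - l'.1), 1 := sum_le_sum fun l' hl' =>
          card_lines_inter_le_one (mem_filter.1 hl').2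
      _ ≤ #L := by rw [← card_eq_sum_ones]; exact card_filter_le _ _
  · calc ∑ l' ∈ L with ¬IsUnit (l.1 - l'.1), #{X | l.1 * X + l.2 = l'.1 * X + l'.2}
        ≤ ∑ l' : R × R with ¬IsUnit (l.1 - l'.1), #{X | l.1 * X + l.2 = l'.1 * X + l'.2} :=
          sum_le_sum_of_subset (filter_subset_filter _ (subset_univ L))
      _ = ∑ A' with ¬IsUnit (l.1 - A'), ∑ B', #{X | l.1 * X + l.2 = A' * X + B'} := by
          rw [← univ_product_univ, filter_product_left (fun A' => ¬IsUnit (l.1 - A')),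
            sum_product]
      _ = Fintype.card R * Nat.card (nonunits R) := by
          simp_rw [sum_card_lines_inter, sum_const, card_filter_sub_not_isUnit, smul_eq_mul,
            mul_comm]

end FiniteRing

theorem card_incidences_le {R : Type*} [Ring R] [Fintype R] (P L : Finset (R × R)) :
    (Nat.card {pl : (R × R) × (R × R) //
        pl.1 ∈ P ∧ pl.2 ∈ L ∧ pl.2.1 * pl.1.1 + pl.2.2 = pl.1.2} : ℝ)
      ≤ #P * #L / Fintype.card R + √(#P * (#L * Fintype.card R * Nat.card (nonunits R))) := by
  classical
  set N : ℝ := (Fintype.card R : ℝ)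
  set k : ℝ := (Nat.card (nonunits R) : ℝ)
  set n : R × R → ℝ := fun p => (#(linesThrough L p) : ℝ)
  have hN : 0 < N := by positivity
  have hsum : ∑ p, n p = #L * N := by
    simp only [n, N]
    exact_mod_cast sum_card_linesThrough L
  have hsum_sq : ∑ p, n p ^ 2 ≤ #L ^ 2 + #L * N * k := by
    have := (sum_sq_card_linesThrough L).trans_le
      (sum_le_sum fun l _ => sum_card_lines_inter_le l L)
    rw [sum_const, smul_eq_mul, mul_add, ← sq, ← mul_assoc] at this
    simp only [n, N, k]
    exact_mod_cast this
  have hvar : ∑ p, (n p - #L / N) ^ 2 ≤ #L * N * k := by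
    have hexp : ∀ p, (n p - #L / N) ^ 2 = n p ^ 2 - 2 * (#L / N) * n p + (#L / N) ^ 2 :=
      fun p => by ring
    rw [sum_congr rfl fun p _ => hexp p, sum_add_distrib, sum_sub_distrib, ← mul_sum, hsum,
      sum_const, card_univ, Fintype.card_prod, nsmul_eq_mul, Nat.cast_mul]
    field_simp
    nlinarith
  rw [natCard_incidences_eq_sum_card_linesThrough, Nat.cast_sum, mul_div_assoc]
  exact (sum_le_card_mul_add_sqrt n P _).trans (by gcongr)

theorem Matrix.card_fin_two (F : Type*) [Fintype F] :
    Fintype.card (Matrix (Fin 2) (Fin 2) F) = Fintype.card F ^ 4 := by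
  rw [Fintype.card_congr Matrix.of.symm]
  simp [← pow_mul]

theorem Matrix.card_nonunits_fin_two_le (F : Type*) [Field F] [Fintype F] :
    Nat.card (nonunits (Matrix (Fin 2) (Fin 2) F)) ≤ 2 * Fintype.card F ^ 3 := by
  have h := card_nonunits_add_card_units (Matrix (Fin 2) (Fin 2) F)
  rw [Matrix.card_GL_field, Fin.prod_univ_two, Nat.card_eq_fintype_card (α := Matrix _ _ _),
    Matrix.card_fin_two] at h
  have hq : 1 ≤ Fintype.card F := Fintype.card_pos
  have h1 : Fintype.card F ^ 0 ≤ Fintype.card F ^ 2 := Nat.pow_le_pow_right hq (by norm_num)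
  have h2 : Fintype.card F ^ 1 ≤ Fintype.card F ^ 2 := Nat.pow_le_pow_right hq (by norm_num)
  simp only [Fin.val_zero, Fin.val_one] at h
  zify [h1, h2] at h ⊢
  nlinarith

theorem stmt_18_general (q : ℕ) (F : Type) [Field F] [Fintype F]
    (hF : Fintype.card F = q)
    (P L : Finset (Matrix (Fin 2) (Fin 2) F × Matrix (Fin 2) (Fin 2) F)) :
    (Nat.card {pl : (Matrix (Fin 2) (Fin 2) F × Matrix (Fin 2) (Fin 2) F) ×
          (Matrix (Fin 2) (Fin 2) F × Matrix (Fin 2) (Fin 2) F) //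
        pl.1 ∈ P ∧ pl.2 ∈ L ∧ pl.2.1 * pl.1.1 + pl.2.2 = pl.1.2} : ℝ) ≤
      (P.card : ℝ) * L.card / (q : ℝ) ^ 4 +
        Real.sqrt 2 * Real.sqrt ((q : ℝ) ^ 7) * Real.sqrt ((P.card : ℝ) * L.card) := by
  have hR : (Fintype.card (Matrix (Fin 2) (Fin 2) F) : ℝ) = q ^ 4 := by
    rw [Matrix.card_fin_two, hF, Nat.cast_pow]
  have hk : (Nat.card (nonunits (Matrix (Fin 2) (Fin 2) F)) : ℝ) ≤ 2 * q ^ 3 := by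
    rw [← hF]
    exact_mod_cast Matrix.card_nonunits_fin_two_le F
  have hroot : (P.card : ℝ) * (L.card * q ^ 4 * Nat.card (nonunits (Matrix (Fin 2) (Fin 2) F)))
      ≤ 2 * q ^ 7 * (P.card * L.card) := by
    have := mul_le_mul_of_nonneg_left hk (by positivity : (0 : ℝ) ≤ P.card * L.card * q ^ 4)
    linarith
  refine (card_incidences_le P L).trans ?_
  rw [hR, ← Real.sqrt_mul zero_le_two, ← Real.sqrt_mul (by positivity)]
  exact add_le_add_right (Real.sqrt_le_sqrt hroot) _

/-- Point-line incidence bound in M_2(F_q)²: for points P and lines L (a line (A,B) is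
{(X,Y) : AX + B = Y}), I(P,L) ≤ |P||L|/q⁴ + √2·q^{7/2}·√(|P||L|). -/
theorem stmt_18 (q : ℕ) (F : Type) [Field F] [Fintype F]
    (hF : Fintype.card F = q) (hq : Odd q)
    (P L : Finset (Matrix (Fin 2) (Fin 2) F × Matrix (Fin 2) (Fin 2) F)) :
    (Nat.card {pl : (Matrix (Fin 2) (Fin 2) F × Matrix (Fin 2) (Fin 2) F) ×
          (Matrix (Fin 2) (Fin 2) F × Matrix (Fin 2) (Fin 2) F) //
        pl.1 ∈ P ∧ pl.2 ∈ L ∧ pl.2.1 * pl.1.1 + pl.2.2 = pl.1.2} : ℝ) ≤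
      (P.card : ℝ) * L.card / (q : ℝ) ^ 4 +
        Real.sqrt 2 * Real.sqrt ((q : ℝ) ^ 7) * Real.sqrt ((P.card : ℝ) * L.card) :=
  stmt_18_general q F hF P L
end
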